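/- For every natural number n and real a > 0 and b > 0, the integral from 0 to a of P_{2n}(y/a)·cos(by) dy equals (−1)^n·√(πa/(2b))·J_{2n+1/2}(ab), where J_ν is the Bessel function of the first kind. -/

import Mathlib

/-!
Expand `cos (b * y)` in its Taylor series and integrate termwise. After the substitution
`y = a * x` the `k`-th term involves the moment `∫ x in 0..1, x ^ (2 * k) * P_{2n}(x)`, which has a
closed form in Gamma functions: it holds for `P_0` and `P_1` by the duplication formula and
propagates along Bonnet's recursion. The factor `1 / Γ(k - n + 1)` of that closed form kills the
terms with `k < n`, and after the shift `k = j + n` the remaining terms are those of the power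
series of `(-1) ^ n * √(π a / (2 b)) * J_{2n+1/2}(a b)`.
-/

open Polynomial MeasureTheory intervalIntegral

/-- Legendre polynomials via Bonnet recursion. -/
noncomputable def legendre : ℕ → Polynomial ℝ
  | 0 => 1
  | 1 => X
  | (n + 2) => C ((2 * (n:ℝ) + 3) / ((n:ℝ) + 2)) * X * legendre (n + 1)
      - C (((n:ℝ) + 1) / ((n:ℝ) + 2)) * legendre n


/-- Bessel function of the first kind of real order (for positive argument),
defined via its power series using the real power function. -/
noncomputable def besselJ (ν : ℝ) (x : ℝ) : ℝ :=
  ∑' k : ℕ, ((-1) ^ k / ((Nat.factorial k : ℝ) * Real.Gamma ((k : ℝ) + ν + 1))) *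
    (x / 2) ^ (2 * (k : ℝ) + ν)

open Real
open scoped Nat

theorem hasSum_intervalIntegral_mul_cos {g : ℝ → ℝ} (hg : Continuous g) (u v b : ℝ) :
    HasSum (fun k : ℕ => (-1) ^ k * b ^ (2 * k) / (2 * k)! * ∫ y in u..v, g y * y ^ (2 * k))
      (∫ y in u..v, g y * Real.cos (b * y)) := by
  have hcompact : IsCompact (Set.uIcc u v) := isCompact_uIcc
  obtain ⟨C, hC⟩ := hcompact.exists_bound_of_continuousOn hg.continuousOn
  obtain ⟨R, hR⟩ := hcompact.exists_bound_of_continuousOn continuousOn_id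
  have hsum := intervalIntegral.hasSum_integral_of_dominated_convergence (a := u) (b := v)
    (μ := volume) (F := fun k y => g y * ((-1) ^ k * (b * y) ^ (2 * k) / (2 * k)!))
    (fun k _ => C * ((|b| * R) ^ (2 * k) / (2 * k)!))
    (fun k => (by fun_prop : Continuous _).aestronglyMeasurable)
    (fun k => Filter.Eventually.of_forall fun y hy => ?bound)
    (Filter.Eventually.of_forall fun _ _ => (Real.hasSum_cosh _).summable.mul_left C)
    intervalIntegrable_const
    (Filter.Eventually.of_forall fun y _ => (Real.hasSum_cos (b * y)).mul_left (g y))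
  case bound =>
    have hy' := Set.uIoc_subset_uIcc hy
    rw [norm_mul, norm_div, norm_mul, norm_pow, norm_neg, norm_one, one_pow, one_mul, norm_pow,
      Real.norm_natCast, norm_mul, Real.norm_eq_abs b]
    have hgy := hC y hy'
    gcongr
    exacts [(norm_nonneg _).trans hgy, hR y hy']
  have hterm (k : ℕ) : (-1) ^ k * b ^ (2 * k) / (2 * k)! * ∫ y in u..v, g y * y ^ (2 * k) =
      ∫ y in u..v, g y * ((-1) ^ k * (b * y) ^ (2 * k) / (2 * k)!) := by
    rw [← intervalIntegral.integral_const_mul]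
    congr 1 with y
    ring
  simpa only [hterm] using hsum

theorem intervalIntegral_comp_div_mul_pow (f : ℝ → ℝ) {a : ℝ} (ha : a ≠ 0) (s : ℕ) :
    ∫ y in 0..a, f (y / a) * y ^ s = a ^ (s + 1) * ∫ x in 0..1, x ^ s * f x := by
  have h :=
    intervalIntegral.integral_comp_mul_left (fun y => f (y / a) * y ^ s) ha (a := 0) (b := 1)
  simp only [mul_zero, mul_one, mul_div_cancel_left₀ _ ha, mul_pow, smul_eq_mul] at h
  rw [eq_inv_mul_iff_mul_eq₀ ha] at h
  rw [← h, pow_succ', mul_assoc, ← intervalIntegral.integral_const_mul (a ^ s)]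
  congr 1
  exact integral_congr fun x _ => by ring

theorem Real.inv_Gamma_eq_mul_inv_Gamma_add_one (x : ℝ) :
    (Gamma x)⁻¹ = x * (Gamma (x + 1))⁻¹ := by
  rcases eq_or_ne x 0 with rfl | hx
  · simp
  · rw [Gamma_add_one hx, mul_inv, ← mul_assoc, mul_inv_cancel₀ hx, one_mul]

theorem Real.Gamma_mul_Gamma_add_half_natCast (s : ℕ) :
    Gamma ((s + 1) / 2) * Gamma ((s + 2) / 2) = √π * s ! / 2 ^ s := by
  have h := Gamma_mul_Gamma_add_half (((s : ℝ) + 1) / 2)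
  rw [show ((s : ℝ) + 1) / 2 + 1 / 2 = (s + 2) / 2 by ring,
    show 2 * (((s : ℝ) + 1) / 2) = s + 1 by ring, Gamma_nat_eq_factorial,
    show (1 : ℝ) - (s + 1) = -s by ring, rpow_neg zero_le_two, rpow_natCast] at h
  rw [h]
  ring

/-- The value of `∫ x in 0..1, x ^ s * (legendre m).eval x` (`integral_pow_mul_legendre`). The
factor `(Gamma ((s - m) / 2 + 1))⁻¹` vanishes when `m - s` is a positive even integer. -/
noncomputable def legendreMoment (s m : ℕ) : ℝ :=
  √π * s ! / 2 ^ (s + 1) * (Gamma ((s - m) / 2 + 1))⁻¹ * (Gamma ((s + m + 3) / 2))⁻¹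

theorem legendreMoment_zero_right (s : ℕ) : legendreMoment s 0 = 1 / (s + 1) := by
  have h := Gamma_mul_Gamma_add_half_natCast (s + 1)
  have hfac : ((s + 1)! : ℝ) = (s + 1) * s ! := by push_cast [Nat.factorial_succ]; ring
  rw [hfac] at h
  push_cast at h
  rw [legendreMoment, mul_assoc, ← mul_inv,
    show ((s : ℝ) - (0 : ℕ)) / 2 + 1 = (s + 1 + 1) / 2 by push_cast; ring,
    show ((s : ℝ) + (0 : ℕ) + 3) / 2 = (s + 1 + 2) / 2 by push_cast; ring, h]
  have := sqrt_pos.2 pi_pos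
  field_simp

theorem legendreMoment_one_right (s : ℕ) : legendreMoment s 1 = 1 / (s + 2) := by
  have h := Gamma_mul_Gamma_add_half_natCast s
  have hG : Gamma (((s : ℝ) + 2) / 2 + 1) = (s + 2) / 2 * Gamma ((s + 2) / 2) :=
    Gamma_add_one (by positivity)
  rw [legendreMoment, mul_assoc, ← mul_inv,
    show ((s : ℝ) - (1 : ℕ)) / 2 + 1 = (s + 1) / 2 by push_cast; ring,
    show ((s : ℝ) + (1 : ℕ) + 3) / 2 = (s + 2) / 2 + 1 by push_cast; ring, hG,
    mul_left_comm, h]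
  have := sqrt_pos.2 pi_pos
  field_simp
  ring

theorem legendreMoment_add_two (s m : ℕ) :
    legendreMoment s (m + 2) = (2 * m + 3) / (m + 2) * legendreMoment (s + 1) (m + 1)
      - (m + 1) / (m + 2) * legendreMoment s m := by
  simp only [legendreMoment, Nat.cast_add, Nat.cast_ofNat, Nat.cast_one]
  rw [show ((s : ℝ) - (m + 2)) / 2 + 1 = (s - m) / 2 by ring,
    show ((s : ℝ) + 1 - (m + 1)) / 2 + 1 = (s - m) / 2 + 1 by ring,
    show ((s : ℝ) + (m + 2) + 3) / 2 = (s + m + 3) / 2 + 1 by ring,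
    show ((s : ℝ) + 1 + (m + 1) + 3) / 2 = (s + m + 3) / 2 + 1 by ring,
    inv_Gamma_eq_mul_inv_Gamma_add_one ((s - m) / 2),
    inv_Gamma_eq_mul_inv_Gamma_add_one ((s + m + 3) / 2)]
  push_cast [Nat.factorial_succ, pow_succ]
  field_simp
  ring

theorem integral_pow_mul_legendre (m s : ℕ) :
    ∫ x in 0..1, x ^ s * (legendre m).eval x = legendreMoment s m := by
  induction m using Nat.twoStepInduction generalizing s with
  | zero =>
    simp only [legendre, eval_one, mul_one, integral_pow, legendreMoment_zero_right]
    norm_num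
  | one =>
    simp only [legendre, eval_X, ← pow_succ, integral_pow, legendreMoment_one_right]
    norm_num
    ring
  | more m ihm ihm1 =>
    have hint (k : ℕ) (p : ℝ[X]) :
        IntervalIntegrable (fun x : ℝ => x ^ k * p.eval x) volume 0 1 :=
      (by fun_prop : Continuous _).intervalIntegrable _ _
    have hrec (x : ℝ) : x ^ s * (legendre (m + 2)).eval x
        = (2 * m + 3) / (m + 2) * (x ^ (s + 1) * (legendre (m + 1)).eval x)
          - (m + 1) / (m + 2) * (x ^ s * (legendre m).eval x) := by
      simp only [legendre, eval_sub, eval_mul, eval_C, eval_X]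
      ring
    simp only [hrec]
    rw [integral_sub ((hint _ _).const_mul _) ((hint _ _).const_mul _),
      intervalIntegral.integral_const_mul, intervalIntegral.integral_const_mul, ihm1, ihm,
      legendreMoment_add_two]

theorem legendreMoment_eq_zero_of_lt_of_even {s m : ℕ} (hsm : s < m) (hpar : Even (m - s)) :
    legendreMoment s m = 0 := by
  obtain ⟨j, hj⟩ := hpar
  have hm : (m : ℝ) = s + 2 * ((j - 1 : ℕ) : ℝ) + 2 := by
    have : m = s + 2 * (j - 1) + 2 := by omega
    exact_mod_cast this
  rw [legendreMoment, show ((s : ℝ) - m) / 2 + 1 = -((j - 1 : ℕ) : ℝ) by rw [hm]; ring,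
    Gamma_neg_nat_eq_zero]
  simp

theorem legendreMoment_add_two_mul (m j : ℕ) :
    legendreMoment (m + 2 * j) m =
      √π * (m + 2 * j)! / (2 ^ (m + 2 * j + 1) * j ! * Gamma (j + m + 3 / 2)) := by
  rw [legendreMoment, show (((m + 2 * j : ℕ) : ℝ) - m) / 2 + 1 = j + 1 by push_cast; ring,
    Gamma_nat_eq_factorial,
    show (((m + 2 * j : ℕ) : ℝ) + m + 3) / 2 = j + m + 3 / 2 by push_cast; ring]
  field_simp

theorem cos_moment_term_eq_besselJ_term (n j : ℕ) {a b : ℝ} (ha : 0 < a) (hb : 0 < b) :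
    (-1) ^ (j + n) * b ^ (2 * (j + n)) / (2 * (j + n))! *
        (a ^ (2 * (j + n) + 1) * legendreMoment (2 * (j + n)) (2 * n))
      = (-1) ^ n * √(π * a / (2 * b)) *
        ((-1) ^ j / (j ! * Gamma (j + (2 * n + 1 / 2) + 1)) *
          (a * b / 2) ^ (2 * (j : ℝ) + (2 * n + 1 / 2))) := by
  have hroot : 0 < √(a * b / 2) := sqrt_pos.2 (by positivity)
  have hsqrt : √(π * a / (2 * b)) = √π * (a / 2) / √(a * b / 2) := by
    rw [eq_div_iff hroot.ne', ← sqrt_mul (by positivity),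
      show π * a / (2 * b) * (a * b / 2) = π * (a / 2) ^ 2 by field_simp,
      sqrt_mul pi_pos.le, sqrt_sq (by positivity)]
  have hpow : (a * b / 2) ^ (2 * (j : ℝ) + (2 * n + 1 / 2)) =
      (a * b / 2) ^ (2 * n + 2 * j) * √(a * b / 2) := by
    rw [show 2 * (j : ℝ) + (2 * n + 1 / 2) = ((2 * n + 2 * j : ℕ) : ℝ) + 1 / 2 by
        push_cast; ring,
      rpow_add (by positivity), rpow_natCast, sqrt_eq_rpow]
  have hGamma : 0 < Gamma (j + ((2 * n : ℕ) : ℝ) + 3 / 2) := Gamma_pos_of_pos (by positivity)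
  rw [show 2 * (j + n) = 2 * n + 2 * j by ring, legendreMoment_add_two_mul, hpow, div_pow, hsqrt,
    show (j : ℝ) + (2 * n + 1 / 2) + 1 = j + ((2 * n : ℕ) : ℝ) + 3 / 2 by push_cast; ring]
  field_simp
  ring

theorem legendre_cos_integral (n : ℕ) (a b : ℝ) (ha : 0 < a) (hb : 0 < b) :
    ∫ y in (0:ℝ)..a, (legendre (2 * n)).eval (y / a) * Real.cos (b * y)
      = (-1) ^ n * Real.sqrt (Real.pi * a / (2 * b)) * besselJ (2 * n + 1 / 2) (a * b) := by
  rw [← (hasSum_intervalIntegral_mul_cos (g := fun y => (legendre (2 * n)).eval (y / a))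
    (by fun_prop) 0 a b).tsum_eq]
  simp only [intervalIntegral_comp_div_mul_pow (fun x => (legendre (2 * n)).eval x) ha.ne',
    integral_pow_mul_legendre]
  rw [← Function.Injective.tsum_eq (add_left_injective n) ?support, besselJ, ← tsum_mul_left]
  · exact tsum_congr fun j => cos_moment_term_eq_besselJ_term n j ha hb
  · intro k hk
    rcases lt_or_ge k n with hkn | hkn
    · have hzero := legendreMoment_eq_zero_of_lt_of_even (by omega : 2 * k < 2 * n) ⟨n - k, by omega⟩
      simp [hzero] at hk
    · exact ⟨k - n, Nat.sub_add_cancel hkn⟩
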